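/- Assume α ∈ [1,5/4), G(−v) = −G(v) and G(v)·v ≥ G*|v|^{2α} for all v ∈ ℝ^d with G* > 0, Φ(|x|) ≥ Φ* > 0 and |F(|x|²)x| ≤ F* for all x ∈ ℝ^d, with F* < 2^{α−1/2} Φ* G*. Let (f_t)_{t∈[0,∞)} be a global weak solution of the kinetic flocking equation with compactly supported measures, set 𝒱₀ = ∫ v f₀(dx,dv), and let ν_t be the pushforward of f_t under the map (x,v) ↦ (x, 𝒱₀). Then for every t ≥ 0 and every function φ : ℝ^{2d} → ℝ with sup|φ| ≤ 1 and Lipschitz constant ≤ 1, one has |∫ φ df_t − ∫ φ dν_t| ≤ ∫ |v − 𝒱₀| f_t(dx,dv) ≤ (𝒢[f_t])^{1/2}; consequently the bounded Lipschitz distance d(f_t, ν_t) := sup over such φ of |∫ φ df_t − ∫ φ dν_t| tends to 0 as t → ∞. -/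

import Mathlib

open MeasureTheory Filter
open scoped RealInnerProductSpace BigOperators ENNReal

noncomputable section

abbrev Euc (d : ℕ) := EuclideanSpace ℝ (Fin d)

abbrev Phase (d : ℕ) := Euc d × Euc d

/-- Euclidean norm on the phase space ℝ^d × ℝ^d ≅ ℝ^{2d}. -/
noncomputable def pnorm {d : ℕ} (z : Phase d) : ℝ :=
  Real.sqrt (‖z.1‖ ^ 2 + ‖z.2‖ ^ 2)

/-- Closed ball of radius `R` (Euclidean norm) in the phase space ℝ^{2d}. -/
def pball (d : ℕ) (R : ℝ) : Set (Phase d) := {z | pnorm z ≤ R}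

/-- Velocity fluctuation 𝒢[f]. -/
noncomputable def velFluc {d : ℕ} (f : Measure (Phase d)) : ℝ :=
  (∫ z, ‖z.2‖ ^ 2 ∂f) - ‖∫ z, z.2 ∂f‖ ^ 2

/-- Position fluctuation Γ[f]. -/
noncomputable def posFluc {d : ℕ} (f : Measure (Phase d)) : ℝ :=
  (∫ z, ‖z.1‖ ^ 2 ∂f) - ‖∫ z, z.1 ∂f‖ ^ 2

/-- Interaction field H_[f]. -/
noncomputable def Hfield {d : ℕ} (Φ : ℝ → ℝ) (G : Euc d → Euc d) (F : ℝ → ℝ) (α : ℝ)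
    (f : Measure (Phase d)) (x v : Euc d) : Euc d :=
  - (∫ z, Φ ‖x - z.1‖ • G (v - z.2) ∂f)
    + velFluc f ^ ((2 * α - 1) / 2) • ∫ z, F (‖x - z.1‖ ^ 2) • (x - z.1) ∂f

/-- A family of compactly supported Borel probability measures is a weak solution of the
kinetic flocking equation on the time set `I` if for every `C¹` test function `φ` the map
`t ↦ ∫ φ d f_t` is differentiable (within `I`) with the stated derivative. -/
def IsWeakSolution {d : ℕ} (Φ : ℝ → ℝ) (G : Euc d → Euc d) (F : ℝ → ℝ) (α : ℝ)
    (I : Set ℝ) (f : ℝ → Measure (Phase d)) : Prop :=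
  (∀ t ∈ I, IsProbabilityMeasure (f t) ∧ ∃ K : Set (Phase d), IsCompact K ∧ f t Kᶜ = 0) ∧
  ∀ φ : Phase d → ℝ, ContDiff ℝ 1 φ → ∀ t ∈ I,
    HasDerivWithinAt (fun s => ∫ z, φ z ∂(f s))
      (∫ z, fderiv ℝ φ z (z.2, Hfield Φ G F α (f t) z.1 z.2) ∂(f t)) I t

/-- Measure-valued solution of the kinetic flocking equation on a time set `I ∋ 0`,
given by a family of compactly supported probability measures together with a flow map `𝒯`. -/
def IsMVSolution {d : ℕ} (Φ : ℝ → ℝ) (G : Euc d → Euc d) (F : ℝ → ℝ) (α : ℝ)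
    (I : Set ℝ) (f₀ : Measure (Phase d)) (f : ℝ → Measure (Phase d))
    (T : ℝ → Phase d → Phase d) : Prop :=
  (0 : ℝ) ∈ I ∧
  ContinuousOn (fun p : ℝ × Phase d => T p.1 p.2) (I ×ˢ Set.univ) ∧
  T 0 = id ∧
  (∀ t ∈ I, IsProbabilityMeasure (f t) ∧ ∃ K : Set (Phase d), IsCompact K ∧ f t Kᶜ = 0) ∧
  (∀ z₀ : Phase d, ∀ t ∈ I,
    HasDerivWithinAt (fun s => T s z₀)
      ((T t z₀).2, Hfield Φ G F α (f t) (T t z₀).1 (T t z₀).2) I t) ∧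
  (∀ t ∈ I, f t = f₀.map (T t))

/-- `π` is a coupling of `f` and `g`. -/
def IsCoupling {d : ℕ} (π : Measure (Phase d × Phase d)) (f g : Measure (Phase d)) : Prop :=
  π.map Prod.fst = f ∧ π.map Prod.snd = g

/-- The Monge–Kantorovich–Rubinstein distance W₁ (with the Euclidean cost on ℝ^{2d}). -/
noncomputable def W1 {d : ℕ} (f g : Measure (Phase d)) : ℝ :=
  sInf {c : ℝ | ∃ π : Measure (Phase d × Phase d), IsProbabilityMeasure π ∧ IsCoupling π f g ∧
    Integrable (fun p => pnorm (p.1 - p.2)) π ∧ c = ∫ p, pnorm (p.1 - p.2) ∂π}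

end

/-!
Testing the weak formulation against `⟪e, v⟫` and `‖v‖²` shows that the mean velocity is
conserved and that `d𝒢/dt = 2 ∫ ⟪v, H[f]⟫ df`. Symmetrizing this integral in the two particles
(`G` is odd), the alignment part contributes at most `-Φ* G* ∫∫ ‖v - w‖^(2α) ≤ -Φ* G* (2𝒢)^α`
(Jensen) and the position part at most `F* 𝒢^((2α-1)/2) √(2𝒢)` (Cauchy–Schwarz), so
`𝒢' ≤ -(2^α Φ* G* - √2 F*) 𝒢^α` with a positive constant, which forces `𝒢 → 0`.
Moving every particle's velocity to `𝒱₀` moves a test function that is `1`-Lipschitz for the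
Euclidean norm by at most `‖v - 𝒱₀‖`, whose mean is at most `√𝒢`.
-/

open Set Topology

section Integrability

variable {X E : Type*} [MeasurableSpace X] [TopologicalSpace X] [OpensMeasurableSpace X]
  [NormedAddCommGroup E] {μ : Measure X} [IsFiniteMeasure μ] {K : Set X}

theorem Continuous.integrable_of_measure_compl_eq_zero [SecondCountableTopologyEither X E]
    {g : X → E} (hg : Continuous g) (hK : IsCompact K) (hμK : μ Kᶜ = 0) : Integrable g μ := by
  obtain ⟨C, hC⟩ := hK.exists_bound_of_continuousOn hg.continuousOn
  exact .of_bound hg.aestronglyMeasurable C (Eventually.mono (mem_ae_iff.2 hμK) hC)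

theorem Continuous.integrable_prod_self_of_measure_compl_eq_zero [SecondCountableTopology X]
    {k : X × X → E} (hk : Continuous k) (hK : IsCompact K) (hμK : μ Kᶜ = 0) :
    Integrable k (μ.prod μ) :=
  hk.integrable_of_measure_compl_eq_zero (hK.prod hK)
    (mem_ae_iff.1 <| (Measure.quasiMeasurePreserving_fst.ae (mem_ae_iff.2 hμK)).and
      (Measure.quasiMeasurePreserving_snd.ae (mem_ae_iff.2 hμK)))

end Integrability

section Symmetrization

variable {X : Type*} [MeasurableSpace X] {μ : Measure X} [SFinite μ] {k : X × X → ℝ}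

theorem integral_prod_self_eq_half_integral_add_swap (hk : Integrable k (μ.prod μ)) :
    ∫ p, k p ∂μ.prod μ = (∫ p, (k p + k p.swap) ∂μ.prod μ) / 2 := by
  have hk_swap : Integrable (fun p => k p.swap) (μ.prod μ) := hk.swap
  rw [integral_add hk hk_swap, integral_prod_swap]
  ring

theorem integral_prod_self_eq_zero_of_swap_eq_neg (hk : ∀ p, k p.swap = -k p) :
    ∫ p, k p ∂μ.prod μ = 0 := by
  have h := integral_prod_swap (μ := μ) (ν := μ) k
  simp only [hk, integral_neg] at h
  linarith

end Symmetrization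

section Jensen

variable {X : Type*} [MeasurableSpace X] {μ : Measure X} [IsProbabilityMeasure μ] {g : X → ℝ}

theorem integral_le_sqrt_integral_sq (hg : Integrable g μ)
    (hg2 : Integrable (fun x => g x ^ 2) μ) :
    ∫ x, g x ∂μ ≤ √(∫ x, g x ^ 2 ∂μ) :=
  (le_abs_self _).trans <| Real.abs_le_sqrt <|
    (even_two.convexOn_pow).map_integral_le (continuous_pow 2).continuousOn isClosed_univ
      (.of_forall fun _ => mem_univ _) hg hg2

theorem rpow_integral_le_integral_rpow {α : ℝ} (hα : 1 ≤ α) (hg0 : ∀ x, 0 ≤ g x)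
    (hg : Integrable g μ) (hgα : Integrable (fun x => g x ^ α) μ) :
    (∫ x, g x ∂μ) ^ α ≤ ∫ x, g x ^ α ∂μ :=
  (convexOn_rpow hα).map_integral_le
    (continuous_id.rpow_const fun _ => .inr (by linarith)).continuousOn isClosed_Ici
    (.of_forall hg0) hg hgα

end Jensen

section Decay

variable {y D : ℝ → ℝ}

theorem antitoneOn_add_mul_of_hasDerivWithinAt_le
    (hy : ∀ t ∈ Ici (0 : ℝ), HasDerivWithinAt y (D t) (Ici 0) t) {B : ℝ}
    (hD : ∀ t ∈ Ici (0 : ℝ), D t ≤ -B) :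
    AntitoneOn (fun s => y s + B * s) (Ici 0) := by
  have hderiv : ∀ t ∈ Ici (0 : ℝ),
      HasDerivWithinAt (fun s => y s + B * s) (D t + B) (Ici 0) t := fun t ht =>
    (hy t ht).add (by simpa using ((hasDerivAt_id t).const_mul B).hasDerivWithinAt)
  refine antitoneOn_of_hasDerivWithinAt_nonpos (f' := fun t => D t + B) (convex_Ici 0)
    (fun t ht => (hderiv t ht).continuousWithinAt) (fun t ht => ?_) (fun t ht => ?_)
  · rw [interior_Ici] at ht ⊢
    exact (hderiv t (mem_Ici.2 (le_of_lt ht))).mono Ioi_subset_Ici_self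
  · rw [interior_Ici] at ht
    linarith [hD t (mem_Ici.2 (le_of_lt ht))]

theorem tendsto_zero_of_hasDerivWithinAt_le_neg_mul_rpow
    (hy : ∀ t ∈ Ici (0 : ℝ), HasDerivWithinAt y (D t) (Ici 0) t) {C α : ℝ} (hC : 0 < C)
    (hα : 0 ≤ α)
    (hy0 : ∀ t ∈ Ici (0 : ℝ), 0 ≤ y t) (hD : ∀ t ∈ Ici (0 : ℝ), D t ≤ -(C * y t ^ α)) :
    Tendsto y atTop (𝓝 0) := by
  have hdecay {ε : ℝ} (hε : 0 ≤ ε) (hyε : ∀ t ∈ Ici (0 : ℝ), ε ≤ y t) :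
      AntitoneOn (fun s => y s + C * ε ^ α * s) (Ici 0) :=
    antitoneOn_add_mul_of_hasDerivWithinAt_le hy fun t ht => (hD t ht).trans <| neg_le_neg <|
      mul_le_mul_of_nonneg_left (Real.rpow_le_rpow hε (hyε t ht) hα) hC.le
  have hanti : AntitoneOn y (Ici 0) := by
    simpa using antitoneOn_add_mul_of_hasDerivWithinAt_le hy (B := 0) fun t ht =>
      (hD t ht).trans (by simpa using mul_nonneg hC.le (Real.rpow_nonneg (hy0 t ht) α))
  rw [Metric.tendsto_atTop]
  intro ε hε
  obtain ⟨T, hT, hyT⟩ : ∃ T ∈ Ici (0 : ℝ), y T < ε := by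
    by_contra! hyε
    have hB : 0 < C * ε ^ α := by positivity
    have hT : 0 ≤ (y 0 + 1) / (C * ε ^ α) := div_nonneg (by linarith [hy0 0 self_mem_Ici]) hB.le
    have := hdecay hε.le hyε self_mem_Ici hT hT
    simp only [mul_zero, add_zero, mul_div_cancel₀ _ hB.ne'] at this
    linarith [hy0 _ hT]
  refine ⟨T, fun t ht => ?_⟩
  rw [Real.dist_0_eq_abs, abs_of_nonneg (hy0 t (hT.trans ht))]
  exact (hanti hT (mem_Ici.2 (hT.trans ht)) ht).trans_lt hyT

theorem eq_of_hasDerivWithinAt_Ici_zero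
    (hy : ∀ t ∈ Ici (0 : ℝ), HasDerivWithinAt y (D t) (Ici 0) t)
    (hD : ∀ t ∈ Ici (0 : ℝ), D t = 0) {t : ℝ} (ht : 0 ≤ t) :
    y t = y 0 :=
  constant_of_has_deriv_right_zero
    (fun s hs => (hy s hs.1).continuousWithinAt.mono Icc_subset_Ici_self)
    (fun s hs => hD s hs.1 ▸ (hy s hs.1).mono (Ici_subset_Ici.2 hs.1)) t ⟨ht, le_rfl⟩

end Decay

section PhaseSpace

variable {d : ℕ}

theorem pnorm_le_two_mul_norm (z : Phase d) : pnorm z ≤ 2 * ‖z‖ :=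
  Real.sqrt_le_iff.2 ⟨by positivity,
    by nlinarith [norm_fst_le z, norm_snd_le z, norm_nonneg z.1, norm_nonneg z.2]⟩

theorem continuous_of_abs_sub_le_pnorm {φ : Phase d → ℝ}
    (hφ : ∀ z₁ z₂, |φ z₁ - φ z₂| ≤ pnorm (z₁ - z₂)) : Continuous φ :=
  (LipschitzWith.of_dist_le_mul (K := 2) fun z₁ z₂ => by
    rw [Real.dist_eq, dist_eq_norm, NNReal.coe_ofNat]
    exact (hφ z₁ z₂).trans (pnorm_le_two_mul_norm _)).continuous

theorem pnorm_sub_mk_fst (z : Phase d) (W : Euc d) : pnorm (z - (z.1, W)) = ‖z.2 - W‖ := by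
  simp [pnorm]

variable {μ : Measure (Phase d)} {K : Set (Phase d)}

theorem abs_integral_sub_integral_map_mk_fst_le [IsFiniteMeasure μ] (hK : IsCompact K)
    (hμK : μ Kᶜ = 0) {φ : Phase d → ℝ} (hφ : ∀ z₁ z₂, |φ z₁ - φ z₂| ≤ pnorm (z₁ - z₂))
    (W : Euc d) :
    |∫ z, φ z ∂μ - ∫ z, φ z ∂μ.map (fun z => (z.1, W))| ≤ ∫ z, ‖z.2 - W‖ ∂μ := by
  have hφc := continuous_of_abs_sub_le_pnorm hφ
  have hproj : Continuous fun z : Phase d => (z.1, W) := by fun_prop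
  have hφW : Integrable (fun z : Phase d => φ (z.1, W)) μ :=
    (hφc.comp hproj).integrable_of_measure_compl_eq_zero hK hμK
  rw [integral_map hproj.aemeasurable hφc.aestronglyMeasurable,
    ← integral_sub (hφc.integrable_of_measure_compl_eq_zero hK hμK) hφW]
  refine abs_integral_le_integral_abs.trans (integral_mono ?_ ?_ fun z => ?_)
  · exact (by fun_prop : Continuous _).integrable_of_measure_compl_eq_zero hK hμK
  · exact (by fun_prop : Continuous _).integrable_of_measure_compl_eq_zero hK hμK
  · simpa only [pnorm_sub_mk_fst] using hφ z (z.1, W)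

variable [IsProbabilityMeasure μ]

theorem integral_norm_snd_sub_sq (hK : IsCompact K) (hμK : μ Kᶜ = 0) (W : Euc d) :
    ∫ z, ‖z.2 - W‖ ^ 2 ∂μ = velFluc μ + ‖∫ z, z.2 ∂μ - W‖ ^ 2 := by
  have hv : Integrable (fun z : Phase d => z.2) μ :=
    continuous_snd.integrable_of_measure_compl_eq_zero hK hμK
  have hv2 : Integrable (fun z : Phase d => ‖z.2‖ ^ 2) μ :=
    (by fun_prop : Continuous _).integrable_of_measure_compl_eq_zero hK hμK
  have hvW : Integrable (fun z : Phase d => 2 * ⟪W, z.2⟫) μ :=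
    (hv.const_inner W).const_mul 2
  simp_rw [norm_sub_sq_real, real_inner_comm W]
  have hv2W : Integrable (fun z : Phase d => ‖z.2‖ ^ 2 - 2 * ⟪W, z.2⟫) μ := hv2.sub hvW
  rw [integral_add hv2W (integrable_const _), integral_sub hv2 hvW, integral_const_mul,
    integral_inner hv, velFluc]
  simp only [integral_const, probReal_univ, one_smul]
  ring

theorem velFluc_eq_integral_norm_snd_sub_sq (hK : IsCompact K) (hμK : μ Kᶜ = 0) :
    velFluc μ = ∫ z, ‖z.2 - ∫ w, w.2 ∂μ‖ ^ 2 ∂μ := by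
  simp [integral_norm_snd_sub_sq hK hμK]

theorem velFluc_nonneg (hK : IsCompact K) (hμK : μ Kᶜ = 0) : 0 ≤ velFluc μ :=
  velFluc_eq_integral_norm_snd_sub_sq hK hμK ▸ integral_nonneg fun _ => sq_nonneg _

theorem integral_norm_snd_sub_le_sqrt_velFluc (hK : IsCompact K) (hμK : μ Kᶜ = 0) :
    ∫ z, ‖z.2 - ∫ w, w.2 ∂μ‖ ∂μ ≤ √(velFluc μ) :=
  velFluc_eq_integral_norm_snd_sub_sq hK hμK ▸ integral_le_sqrt_integral_sq
    ((by fun_prop : Continuous _).integrable_of_measure_compl_eq_zero hK hμK)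
    ((by fun_prop : Continuous _).integrable_of_measure_compl_eq_zero hK hμK)

theorem integral_prod_norm_sub_sq (hK : IsCompact K) (hμK : μ Kᶜ = 0) :
    ∫ p, ‖p.1.2 - p.2.2‖ ^ 2 ∂μ.prod μ = 2 * velFluc μ := by
  have hsq := (by fun_prop : Continuous fun p : Phase d × Phase d =>
    ‖p.1.2 - p.2.2‖ ^ 2).integrable_prod_self_of_measure_compl_eq_zero hK hμK
  rw [integral_prod _ hsq]
  have hinner (x : Phase d) :
      ∫ y, ‖x.2 - y.2‖ ^ 2 ∂μ = velFluc μ + ‖x.2 - ∫ w, w.2 ∂μ‖ ^ 2 := by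
    simp_rw [norm_sub_rev x.2]
    rw [integral_norm_snd_sub_sq hK hμK, norm_sub_rev]
  simp_rw [hinner]
  rw [integral_add (integrable_const _)
    ((by fun_prop : Continuous _).integrable_of_measure_compl_eq_zero hK hμK),
    ← velFluc_eq_integral_norm_snd_sub_sq hK hμK]
  simp only [integral_const, probReal_univ, smul_eq_mul, one_mul]
  ring

end PhaseSpace

section InteractionField

variable {d : ℕ} {Φ F : ℝ → ℝ} {G : Euc d → Euc d} {α : ℝ}
  {μ : Measure (Phase d)} {K : Set (Phase d)}

theorem integral_inner_Hfield (hΦ : Continuous Φ) (hG : Continuous G) (hF : Continuous F)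
    [IsFiniteMeasure μ] (hK : IsCompact K) (hμK : μ Kᶜ = 0)
    {a : Phase d → Euc d} (ha : Continuous a) :
    ∫ z, ⟪a z, Hfield Φ G F α μ z.1 z.2⟫ ∂μ =
      -(∫ p, Φ ‖p.1.1 - p.2.1‖ * ⟪a p.1, G (p.1.2 - p.2.2)⟫ ∂μ.prod μ) +
        velFluc μ ^ ((2 * α - 1) / 2) *
          ∫ p, F (‖p.1.1 - p.2.1‖ ^ 2) * ⟪a p.1, p.1.1 - p.2.1⟫ ∂μ.prod μ := by
  have hA := (by fun_prop : Continuous fun p : Phase d × Phase d =>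
    Φ ‖p.1.1 - p.2.1‖ * ⟪a p.1, G (p.1.2 - p.2.2)⟫).integrable_prod_self_of_measure_compl_eq_zero
      hK hμK
  have hB := (by fun_prop : Continuous fun p : Phase d × Phase d =>
    F (‖p.1.1 - p.2.1‖ ^ 2) * ⟪a p.1, p.1.1 - p.2.1⟫).integrable_prod_self_of_measure_compl_eq_zero
      hK hμK
  rw [integral_prod _ hA, integral_prod _ hB, ← integral_neg, ← integral_const_mul,
    ← integral_add]
  rotate_left
  · exact hA.integral_prod_left.neg
  · exact hB.integral_prod_left.const_mul _
  refine integral_congr_ae (.of_forall fun z => ?_)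
  have hAz := (by fun_prop : Continuous fun w : Phase d =>
    Φ ‖z.1 - w.1‖ • G (z.2 - w.2)).integrable_of_measure_compl_eq_zero hK hμK
  have hBz := (by fun_prop : Continuous fun w : Phase d =>
    F (‖z.1 - w.1‖ ^ 2) • (z.1 - w.1)).integrable_of_measure_compl_eq_zero hK hμK
  dsimp only
  rw [Hfield, inner_add_right, inner_neg_right, real_inner_smul_right, ← integral_inner hAz,
    ← integral_inner hBz]
  simp_rw [real_inner_smul_right]

theorem integral_inner_const_Hfield (hΦ : Continuous Φ) (hG : Continuous G) (hF : Continuous F)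
    (hGodd : ∀ v, G (-v) = -G v) [IsFiniteMeasure μ] (hK : IsCompact K)
    (hμK : μ Kᶜ = 0) (e : Euc d) :
    ∫ z, ⟪e, Hfield Φ G F α μ z.1 z.2⟫ ∂μ = 0 := by
  rw [integral_inner_Hfield (a := fun _ => e) hΦ hG hF hK hμK continuous_const,
    integral_prod_self_eq_zero_of_swap_eq_neg, integral_prod_self_eq_zero_of_swap_eq_neg]
  · simp
  · rintro ⟨⟨x, v⟩, y, w⟩
    simp only [Prod.swap_prod_mk]
    rw [norm_sub_rev y, ← neg_sub x, inner_neg_right, mul_neg]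
  · rintro ⟨⟨x, v⟩, y, w⟩
    simp only [Prod.swap_prod_mk]
    rw [norm_sub_rev y, ← neg_sub v, hGodd, inner_neg_right, mul_neg]

variable [IsProbabilityMeasure μ]

theorem le_integral_prod_alignment (hΦ : Continuous Φ) (hG : Continuous G) (hα : 1 ≤ α)
    {Φs Gs : ℝ} (hΦs : 0 ≤ Φs) (hGs : 0 ≤ Gs) (hGodd : ∀ v, G (-v) = -G v)
    (hGcoer : ∀ v, Gs * ‖v‖ ^ (2 * α) ≤ ⟪G v, v⟫) (hΦlow : ∀ x : Euc d, Φs ≤ Φ ‖x‖)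
    (hK : IsCompact K) (hμK : μ Kᶜ = 0) :
    Φs * Gs * (2 * velFluc μ) ^ α / 2 ≤
      ∫ p, Φ ‖p.1.1 - p.2.1‖ * ⟪p.1.2, G (p.1.2 - p.2.2)⟫ ∂μ.prod μ := by
  have hk := (by fun_prop : Continuous fun p : Phase d × Phase d =>
    Φ ‖p.1.1 - p.2.1‖ * ⟪p.1.2, G (p.1.2 - p.2.2)⟫).integrable_prod_self_of_measure_compl_eq_zero
      hK hμK
  have hsq := (by fun_prop : Continuous fun p : Phase d × Phase d =>
    ‖p.1.2 - p.2.2‖ ^ 2).integrable_prod_self_of_measure_compl_eq_zero hK hμK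
  have hrpow (u : Euc d) : ‖u‖ ^ (2 * α) = (‖u‖ ^ 2) ^ α := by
    rw [← Real.rpow_natCast, ← Real.rpow_mul (norm_nonneg u), Nat.cast_ofNat]
  have hrpowi : Integrable (fun p : Phase d × Phase d => ‖p.1.2 - p.2.2‖ ^ (2 * α)) (μ.prod μ) :=
    ((continuous_fst.snd.sub continuous_snd.snd).norm.rpow_const fun _ => .inr (by linarith)
      ).integrable_prod_self_of_measure_compl_eq_zero hK hμK
  have hjensen : (2 * velFluc μ) ^ α ≤ ∫ p, ‖p.1.2 - p.2.2‖ ^ (2 * α) ∂μ.prod μ := by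
    simp_rw [hrpow] at hrpowi ⊢
    rw [← integral_prod_norm_sub_sq hK hμK]
    exact rpow_integral_le_integral_rpow hα (fun _ => sq_nonneg _) hsq hrpowi
  have hsym (p : Phase d × Phase d) : Φs * Gs * ‖p.1.2 - p.2.2‖ ^ (2 * α) ≤
      Φ ‖p.1.1 - p.2.1‖ * ⟪p.1.2, G (p.1.2 - p.2.2)⟫ +
        Φ ‖p.2.1 - p.1.1‖ * ⟪p.2.2, G (p.2.2 - p.1.2)⟫ := by
    obtain ⟨⟨x, v⟩, y, w⟩ := p
    calc Φs * Gs * ‖v - w‖ ^ (2 * α) ≤ Φ ‖x - y‖ * ⟪G (v - w), v - w⟫ := by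
          rw [mul_assoc]
          exact mul_le_mul (hΦlow _) (hGcoer _) (by positivity) (hΦs.trans (hΦlow _))
      _ = Φ ‖x - y‖ * ⟪v, G (v - w)⟫ + Φ ‖y - x‖ * ⟪w, G (w - v)⟫ := by
          rw [norm_sub_rev y, ← neg_sub v, hGodd, inner_neg_right, real_inner_comm, inner_sub_left]
          ring
  rw [integral_prod_self_eq_half_integral_add_swap hk]
  gcongr
  calc Φs * Gs * (2 * velFluc μ) ^ α
      ≤ Φs * Gs * ∫ p, ‖p.1.2 - p.2.2‖ ^ (2 * α) ∂μ.prod μ := by gcongr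
    _ = ∫ p, Φs * Gs * ‖p.1.2 - p.2.2‖ ^ (2 * α) ∂μ.prod μ := (integral_const_mul _ _).symm
    _ ≤ _ := integral_mono (hrpowi.const_mul _) (hk.add hk.swap) hsym

theorem integral_prod_attraction_le (hF : Continuous F) {Fs : ℝ}
    (hFbd : ∀ x : Euc d, ‖F (‖x‖ ^ 2) • x‖ ≤ Fs) (hK : IsCompact K) (hμK : μ Kᶜ = 0) :
    ∫ p, F (‖p.1.1 - p.2.1‖ ^ 2) * ⟪p.1.2, p.1.1 - p.2.1⟫ ∂μ.prod μ ≤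
      Fs * √(2 * velFluc μ) / 2 := by
  have hk := (by fun_prop : Continuous fun p : Phase d × Phase d =>
    F (‖p.1.1 - p.2.1‖ ^ 2) * ⟪p.1.2, p.1.1 - p.2.1⟫).integrable_prod_self_of_measure_compl_eq_zero
      hK hμK
  have hnorm := (by fun_prop : Continuous fun p : Phase d × Phase d =>
    ‖p.1.2 - p.2.2‖).integrable_prod_self_of_measure_compl_eq_zero hK hμK
  have hsq := (by fun_prop : Continuous fun p : Phase d × Phase d =>
    ‖p.1.2 - p.2.2‖ ^ 2).integrable_prod_self_of_measure_compl_eq_zero hK hμK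
  have hsym (p : Phase d × Phase d) :
      F (‖p.1.1 - p.2.1‖ ^ 2) * ⟪p.1.2, p.1.1 - p.2.1⟫ +
        F (‖p.2.1 - p.1.1‖ ^ 2) * ⟪p.2.2, p.2.1 - p.1.1⟫ ≤ Fs * ‖p.1.2 - p.2.2‖ := by
    obtain ⟨⟨x, v⟩, y, w⟩ := p
    calc F (‖x - y‖ ^ 2) * ⟪v, x - y⟫ + F (‖y - x‖ ^ 2) * ⟪w, y - x⟫
        = ⟪v - w, F (‖x - y‖ ^ 2) • (x - y)⟫ := by
          rw [norm_sub_rev y, ← neg_sub x, inner_neg_right, real_inner_smul_right, inner_sub_left]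
          ring
      _ ≤ ‖v - w‖ * Fs := (real_inner_le_norm _ _).trans (by gcongr; exact hFbd _)
      _ = Fs * ‖v - w‖ := mul_comm _ _
  rw [integral_prod_self_eq_half_integral_add_swap hk]
  gcongr
  calc ∫ p, (F (‖p.1.1 - p.2.1‖ ^ 2) * ⟪p.1.2, p.1.1 - p.2.1⟫ +
          F (‖p.2.1 - p.1.1‖ ^ 2) * ⟪p.2.2, p.2.1 - p.1.1⟫) ∂μ.prod μ
      ≤ ∫ p, Fs * ‖p.1.2 - p.2.2‖ ∂μ.prod μ :=
        integral_mono (hk.add hk.swap) (hnorm.const_mul _) hsym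
    _ = Fs * ∫ p, ‖p.1.2 - p.2.2‖ ∂μ.prod μ := integral_const_mul _ _
    _ ≤ Fs * √(2 * velFluc μ) := by
        gcongr
        · exact (norm_nonneg _).trans (hFbd 0)
        · rw [← integral_prod_norm_sub_sq hK hμK]
          exact integral_le_sqrt_integral_sq hnorm hsq

theorem integral_inner_snd_Hfield_le (hΦ : Continuous Φ) (hG : Continuous G) (hF : Continuous F)
    (hα : 1 ≤ α) {Φs Gs Fs : ℝ} (hΦs : 0 ≤ Φs) (hGs : 0 ≤ Gs) (hGodd : ∀ v, G (-v) = -G v)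
    (hGcoer : ∀ v, Gs * ‖v‖ ^ (2 * α) ≤ ⟪G v, v⟫) (hΦlow : ∀ x : Euc d, Φs ≤ Φ ‖x‖)
    (hFbd : ∀ x : Euc d, ‖F (‖x‖ ^ 2) • x‖ ≤ Fs) (hK : IsCompact K) (hμK : μ Kᶜ = 0) :
    ∫ z, ⟪z.2, Hfield Φ G F α μ z.1 z.2⟫ ∂μ ≤
      -((2 ^ α * Φs * Gs - √2 * Fs) / 2 * velFluc μ ^ α) := by
  have h𝒢 := velFluc_nonneg hK hμK
  have halign := le_integral_prod_alignment hΦ hG hα hΦs hGs hGodd hGcoer hΦlow hK hμK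
  have hattr := mul_le_mul_of_nonneg_left (integral_prod_attraction_le hF hFbd hK hμK)
    (Real.rpow_nonneg h𝒢 ((2 * α - 1) / 2))
  have hpow : velFluc μ ^ ((2 * α - 1) / 2) * √(2 * velFluc μ) = √2 * velFluc μ ^ α := by
    rw [Real.sqrt_mul zero_le_two, Real.sqrt_eq_rpow (velFluc μ), mul_left_comm,
      ← Real.rpow_add' h𝒢 (by linarith)]
    ring_nf
  rw [Real.mul_rpow zero_le_two h𝒢] at halign
  rw [integral_inner_Hfield hΦ hG hF hK hμK continuous_snd]
  linear_combination halign + hattr + Fs / 2 * hpow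

end InteractionField

namespace IsWeakSolution

variable {d : ℕ} {Φ F : ℝ → ℝ} {G : Euc d → Euc d} {α : ℝ} {f : ℝ → Measure (Phase d)}

theorem integral_snd_eq (hsol : IsWeakSolution Φ G F α (Ici 0) f) (hΦ : Continuous Φ)
    (hG : Continuous G) (hF : Continuous F) (hGodd : ∀ v, G (-v) = -G v) {t : ℝ} (ht : 0 ≤ t) :
    ∫ z, z.2 ∂f t = ∫ z, z.2 ∂f 0 := by
  have hv {s : ℝ} (hs : 0 ≤ s) : Integrable (fun z : Phase d => z.2) (f s) := by
    obtain ⟨_, K, hK, hμK⟩ := hsol.1 s hs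
    exact continuous_snd.integrable_of_measure_compl_eq_zero hK hμK
  refine ext_inner_left ℝ fun e => ?_
  rw [← integral_inner (hv ht), ← integral_inner (hv le_rfl)]
  let L : Phase d →L[ℝ] ℝ := (innerSL ℝ e).comp (.snd ℝ _ _)
  refine eq_of_hasDerivWithinAt_Ici_zero (fun s hs => hsol.2 L L.contDiff s hs) (fun s hs => ?_) ht
  obtain ⟨_, K, hK, hμK⟩ := hsol.1 s hs
  simpa [L, L.fderiv] using integral_inner_const_Hfield hΦ hG hF hGodd hK hμK e

theorem hasDerivWithinAt_velFluc (hsol : IsWeakSolution Φ G F α (Ici 0) f) (hΦ : Continuous Φ)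
    (hG : Continuous G) (hF : Continuous F) (hGodd : ∀ v, G (-v) = -G v) {t : ℝ} (ht : 0 ≤ t) :
    HasDerivWithinAt (fun s => velFluc (f s))
      (2 * ∫ z, ⟪z.2, Hfield Φ G F α (f t) z.1 z.2⟫ ∂f t) (Ici 0) t := by
  have hfderiv (z h : Phase d) : fderiv ℝ (fun z : Phase d => ‖z.2‖ ^ 2) z h = 2 * ⟪z.2, h.2⟫ := by
    rw [(hasFDerivAt_snd.norm_sq).fderiv]
    simp
  have hder := hsol.2 _ (contDiff_snd.norm_sq ℝ) t ht
  simp_rw [hfderiv, integral_const_mul] at hder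
  have hvelFluc {s : ℝ} (hs : 0 ≤ s) :
      velFluc (f s) = ∫ z, ‖z.2‖ ^ 2 ∂f s - ‖∫ z, z.2 ∂f 0‖ ^ 2 := by
    rw [velFluc, hsol.integral_snd_eq hΦ hG hF hGodd hs]
  exact (hder.sub_const _).congr (fun s hs => hvelFluc hs) (hvelFluc ht)

theorem tendsto_velFluc_atTop (hsol : IsWeakSolution Φ G F α (Ici 0) f) (hΦ : Continuous Φ)
    (hG : Continuous G) (hF : Continuous F) (hα : 1 ≤ α) {Φs Gs Fs : ℝ} (hΦs : 0 ≤ Φs)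
    (hGs : 0 ≤ Gs) (hGodd : ∀ v, G (-v) = -G v) (hGcoer : ∀ v, Gs * ‖v‖ ^ (2 * α) ≤ ⟪G v, v⟫)
    (hΦlow : ∀ x : Euc d, Φs ≤ Φ ‖x‖) (hFbd : ∀ x : Euc d, ‖F (‖x‖ ^ 2) • x‖ ≤ Fs)
    (hFs : Fs < 2 ^ (α - 1 / 2) * Φs * Gs) :
    Tendsto (fun t => velFluc (f t)) atTop (𝓝 0) := by
  have hC : 0 < 2 ^ α * Φs * Gs - √2 * Fs := by
    have h2 : √2 * (2 : ℝ) ^ (α - 1 / 2) = 2 ^ α := by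
      rw [Real.sqrt_eq_rpow, ← Real.rpow_add zero_lt_two]
      ring_nf
    linear_combination mul_lt_mul_of_pos_left hFs (Real.sqrt_pos.2 zero_lt_two) + Φs * Gs * h2
  refine tendsto_zero_of_hasDerivWithinAt_le_neg_mul_rpow
    (fun t ht => hsol.hasDerivWithinAt_velFluc hΦ hG hF hGodd ht) hC (by linarith : (0 : ℝ) ≤ α)
    (fun t ht => ?_) (fun t ht => ?_)
  all_goals obtain ⟨_, K, hK, hμK⟩ := hsol.1 t ht
  · exact velFluc_nonneg hK hμK
  · linarith [integral_inner_snd_Hfield_le hΦ hG hF hα hΦs hGs hGodd hGcoer hΦlow hFbd hK hμK]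

end IsWeakSolution

theorem stmt18_general {d : ℕ} (Φ F : ℝ → ℝ) (G : Euc d → Euc d) (α : ℝ)
    (hΦc : Continuous Φ) (hGc : Continuous G) (hFc : Continuous F)
    (hα : 1 ≤ α ∧ α < 5 / 4)
    (Gs Φs Fs : ℝ) (hGs : 0 < Gs) (hΦs : 0 < Φs)
    (hGodd : ∀ v : Euc d, G (-v) = -G v)
    (hGcoer : ∀ v : Euc d, Gs * ‖v‖ ^ (2 * α) ≤ ⟪G v, v⟫)
    (hΦlow : ∀ x : Euc d, Φs ≤ Φ ‖x‖)
    (hFbd : ∀ x : Euc d, ‖F (‖x‖ ^ 2) • x‖ ≤ Fs)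
    (hFs : Fs < (2 : ℝ) ^ (α - 1 / 2) * Φs * Gs)
    (f : ℝ → Measure (Phase d))
    (hsol : IsWeakSolution Φ G F α (Set.Ici 0) f)
    (V₀ : Euc d) (hV₀ : V₀ = ∫ z, z.2 ∂(f 0))
    (ν : ℝ → Measure (Phase d))
    (hν : ∀ t : ℝ, ν t = (f t).map (fun z : Phase d => (z.1, V₀))) :
    (∀ t ∈ Set.Ici (0 : ℝ), ∀ φ : Phase d → ℝ,
      (∀ z, |φ z| ≤ 1) → (∀ z₁ z₂ : Phase d, |φ z₁ - φ z₂| ≤ pnorm (z₁ - z₂)) →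
        |(∫ z, φ z ∂(f t)) - ∫ z, φ z ∂(ν t)| ≤ (∫ z, ‖z.2 - V₀‖ ∂(f t)) ∧
        (∫ z, ‖z.2 - V₀‖ ∂(f t)) ≤ Real.sqrt (velFluc (f t))) ∧
    Tendsto (fun t =>
        sSup {c : ℝ | ∃ φ : Phase d → ℝ, (∀ z, |φ z| ≤ 1) ∧
          (∀ z₁ z₂ : Phase d, |φ z₁ - φ z₂| ≤ pnorm (z₁ - z₂)) ∧
          c = |(∫ z, φ z ∂(f t)) - ∫ z, φ z ∂(ν t)|})
      atTop (nhds 0) := by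
  have hbound (t : ℝ) (ht : t ∈ Ici 0) (φ : Phase d → ℝ)
      (hφ : ∀ z₁ z₂ : Phase d, |φ z₁ - φ z₂| ≤ pnorm (z₁ - z₂)) :
      |(∫ z, φ z ∂(f t)) - ∫ z, φ z ∂(ν t)| ≤ (∫ z, ‖z.2 - V₀‖ ∂(f t)) ∧
        (∫ z, ‖z.2 - V₀‖ ∂(f t)) ≤ √(velFluc (f t)) := by
    obtain ⟨_, K, hK, hμK⟩ := hsol.1 t ht
    rw [hν, hV₀, ← hsol.integral_snd_eq hΦc hGc hFc hGodd ht]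
    exact ⟨abs_integral_sub_integral_map_mk_fst_le hK hμK hφ _,
      integral_norm_snd_sub_le_sqrt_velFluc hK hμK⟩
  have hsqrt : Tendsto (fun t => √(velFluc (f t))) atTop (𝓝 0) := by
    simpa using (hsol.tendsto_velFluc_atTop hΦc hGc hFc hα.1 hΦs.le hGs.le hGodd hGcoer hΦlow hFbd
      hFs).sqrt
  refine ⟨fun t ht φ _ hφ => hbound t ht φ hφ,
    squeeze_zero' (.of_forall fun t => Real.sSup_nonneg ?_) ?_ hsqrt⟩
  · rintro _ ⟨φ, -, -, rfl⟩
    exact abs_nonneg _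
  · filter_upwards [eventually_ge_atTop 0] with t ht
    refine Real.sSup_le ?_ (Real.sqrt_nonneg _)
    rintro _ ⟨φ, -, hφ, rfl⟩
    exact (hbound t ht φ hφ).1.trans (hbound t ht φ hφ).2

/-- convergence of the solution to the monokinetic profile
ρ_t ⊗ δ_(v = 𝒱₀) in the bounded Lipschitz distance. -/
theorem stmt18 {d : ℕ} (hd : 1 ≤ d) (Φ F : ℝ → ℝ) (G : Euc d → Euc d) (α : ℝ)
    (hΦc : Continuous Φ) (hGc : Continuous G) (hFc : Continuous F)
    (hα : 1 ≤ α ∧ α < 5 / 4)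
    (Gs Φs Fs : ℝ) (hGs : 0 < Gs) (hΦs : 0 < Φs)
    (hGodd : ∀ v : Euc d, G (-v) = -G v)
    (hGcoer : ∀ v : Euc d, Gs * ‖v‖ ^ (2 * α) ≤ ⟪G v, v⟫)
    (hΦlow : ∀ x : Euc d, Φs ≤ Φ ‖x‖)
    (hFbd : ∀ x : Euc d, ‖F (‖x‖ ^ 2) • x‖ ≤ Fs)
    (hFs : Fs < (2 : ℝ) ^ (α - 1 / 2) * Φs * Gs)
    (f : ℝ → Measure (Phase d))
    (hsol : IsWeakSolution Φ G F α (Set.Ici 0) f)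
    (V₀ : Euc d) (hV₀ : V₀ = ∫ z, z.2 ∂(f 0))
    (ν : ℝ → Measure (Phase d))
    (hν : ∀ t : ℝ, ν t = (f t).map (fun z : Phase d => (z.1, V₀))) :
    (∀ t ∈ Set.Ici (0 : ℝ), ∀ φ : Phase d → ℝ,
      (∀ z, |φ z| ≤ 1) → (∀ z₁ z₂ : Phase d, |φ z₁ - φ z₂| ≤ pnorm (z₁ - z₂)) →
        |(∫ z, φ z ∂(f t)) - ∫ z, φ z ∂(ν t)| ≤ (∫ z, ‖z.2 - V₀‖ ∂(f t)) ∧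
        (∫ z, ‖z.2 - V₀‖ ∂(f t)) ≤ Real.sqrt (velFluc (f t))) ∧
    Tendsto (fun t =>
        sSup {c : ℝ | ∃ φ : Phase d → ℝ, (∀ z, |φ z| ≤ 1) ∧
          (∀ z₁ z₂ : Phase d, |φ z₁ - φ z₂| ≤ pnorm (z₁ - z₂)) ∧
          c = |(∫ z, φ z ∂(f t)) - ∫ z, φ z ∂(ν t)|})
      atTop (nhds 0) :=
  stmt18_general Φ F G α hΦc hGc hFc hα Gs Φs Fs hGs hΦs hGodd hGcoer hΦlow hFbd hFs f hsol V₀ hV₀ ν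
    hν
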